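/- arXiv:2103.00094 — 4 statements merged into one kernel-verified Lean document; each statement's English description precedes it below -/
import Mathlib

section
/- Let k be a separably closed field. Then every finite dimensional division algebra over k is commutative, hence a (purely inseparable) field extension of k. -/
/-- Every finite dimensional division algebra over a separably closed field is commutative
(hence a purely inseparable field extension of the base field). -/
theorem divisionAlgebra_comm_of_isSepClosed (k D : Type*) [Field k] [IsSepClosed k]
    [DivisionRing D] [Algebra k D] [FiniteDimensional k D] :
    ∀ a b : D, a * b = b * a := by
  by_contra h
  push_neg at h
  obtain ⟨a, b, hab⟩ := h
  set Z := Subring.center D with hZ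
  letI : Algebra k Z := ((algebraMap k D).codRestrict Z
    (fun x => Subring.mem_center_iff.2 fun y => (Algebra.commutes x y).symm)).toAlgebra
  haveI : IsScalarTower k Z D := .of_algebraMap_eq fun _ => rfl
  haveI : Algebra.IsAlgebraic k D := Algebra.IsAlgebraic.of_finite k D
  haveI : Algebra.IsAlgebraic k Z := by
    constructor
    intro z
    have hz : IsAlgebraic k (algebraMap Z D z) := Algebra.IsAlgebraic.isAlgebraic _
    exact (isAlgebraic_algebraMap_iff (algebraMap Z D).injective).1 hz
  haveI : Algebra.IsAlgebraic Z D := Algebra.IsAlgebraic.tower_top (K := k) Z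
  haveI : IsSepClosed Z := Algebra.IsAlgebraic.isSepClosed (F := k) (E := Z)
  have hne : Z ≠ (⊤ : Subring D) := by
    intro htop
    apply hab
    have hb : b ∈ Z := htop ▸ Subring.mem_top b
    exact Subring.mem_center_iff.1 hb a
  obtain ⟨x, hx, hsep⟩ := JacobsonNoether.exists_separable_and_not_isCentral D hne
  apply hx
  have hint : IsIntegral Z x := hsep.isIntegral
  have hdeg : (minpoly Z x).degree = 1 :=
    IsSepClosed.degree_eq_one_of_irreducible Z (minpoly.irreducible hint) hsep
  obtain ⟨y, hy⟩ := minpoly.degree_eq_one_iff.1 hdeg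
  rw [← hy]
  exact y.2
end

section
/- Let D be a finite dimensional division algebra over a separably closed field k of characteristic p > 0, and let a ∈ D. Then a^q lies in the center k for some power q of p, and consequently the inner derivation ad_a = [a, -] : D → D satisfies ad_a^q = 0. -/
open Polynomial

/-- Let `D` be a finite dimensional division algebra over a separably closed field `k` of
characteristic `p > 0` and let `a ∈ D`.  Then `a ^ q` lies in (the image of) `k` for some
power `q = p ^ n` of `p`, and consequently the inner derivation `ad_a = [a, -]` satisfies
`ad_a ^ q = 0`. -/
theorem pow_mem_base_and_ad_pow_eq_zero (k D : Type*) (p : ℕ) [Field k] [IsSepClosed k]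
    [CharP k p] [Fact p.Prime] [DivisionRing D] [Algebra k D] [FiniteDimensional k D]
    (a : D) :
    ∃ n : ℕ, a ^ p ^ n ∈ Set.range (algebraMap k D) ∧
      ((LinearMap.mulLeft k a - LinearMap.mulRight k a : Module.End k D) ^ p ^ n = 0) := by
  have hp : p.Prime := Fact.out
  haveI : ExpChar k p := ExpChar.prime hp
  have hint : IsIntegral k a := Algebra.IsIntegral.isIntegral a
  have hirr := minpoly.irreducible hint
  obtain ⟨g, hgsep, m, hge⟩ := hirr.hasSeparableContraction p
  have hgi : Irreducible g :=
    Polynomial.of_irreducible_expand_pow hp.ne_zero (hge ▸ hirr)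
  have hdeg : g.degree = 1 := IsSepClosed.degree_eq_one_of_irreducible k hgi hgsep
  have h1 : (minpoly k a).natSepDegree = 1 := by
    rw [← hge, Polynomial.natSepDegree_expand _ p,
      hgsep.natSepDegree_eq_natDegree, Polynomial.natDegree_eq_of_degree_eq_some hdeg]
    rfl
  obtain ⟨n, c, hc⟩ := (minpoly.natSepDegree_eq_one_iff_eq_X_pow_sub_C p).1 h1
  have ha : a ^ p ^ n = algebraMap k D c := by
    have := minpoly.aeval k a
    rw [hc] at this
    simpa [sub_eq_zero] using this
  refine ⟨n, ⟨c, ha.symm⟩, ?_⟩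
  haveI : CharP (Module.End k D) p :=
    charP_of_injective_algebraMap (algebraMap k (Module.End k D)).injective p
  rw [sub_pow_char_pow_of_commute p n (LinearMap.commute_mulLeft_right a a),
    LinearMap.pow_mulLeft, LinearMap.pow_mulRight, ha, sub_eq_zero]
  ext x
  simp [Algebra.commutes c x]
end

section
/- Hutchinson's theorem: if a real polynomial ∑_{i=0}^k a_i x^i has all coefficients a_i positive and satisfies a_i^2 > 4 a_{i-1} a_{i+1} for all i = 1, …, k-1, then all its roots are real and negative. -/
/-!
Write `a_j` for the coefficients of `P` and, for `t > 0`, `c_j = a_j t ^ j`, so that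
`P(-t) = ∑ (-1) ^ j c_j`. The hypothesis makes `c` log-concave, hence unimodal. If
`c_m + c_(m+2) < c_(m+1)`, i.e. `a_m - a_(m+1) t + a_(m+2) t ^ 2 < 0`, the alternating sums on
either side of the peak `c_(m+1)` are bounded by its neighbours, so `P(-t)` has the sign of
`(-1) ^ (m+1)`. Such a `t` exists for every `m < k` because the discriminant
`a_(m+1) ^ 2 - 4 a_m a_(m+2)` is positive (for `m + 1 = k` the quadratic degenerates), and these
points increase with `m`. With `P(0) > 0` this gives `k` sign changes on the negative axis, hence
`k` distinct negative roots, which exhaust the complex roots as `deg P = k`.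
-/

open Polynomial Finset

theorem neg_one_pow_succ_mul_sum_range_succ (c : ℕ → ℝ) (n : ℕ) :
    (-1) ^ (n + 1) * ∑ j ∈ range (n + 2), (-1) ^ j * c j
      = c (n + 1) - (-1) ^ n * ∑ j ∈ range (n + 1), (-1) ^ j * c j := by
  rw [sum_range_succ, mul_add, ← mul_assoc, ← pow_add, Even.neg_one_pow ⟨n + 1, rfl⟩]
  ring

theorem alternating_sum_nonneg_le_of_antitone {c : ℕ → ℝ} (hc : ∀ j, 0 ≤ c j)
    (hanti : Antitone c) (d : ℕ) :
    0 ≤ ∑ j ∈ range d, (-1) ^ j * c j ∧ ∑ j ∈ range d, (-1) ^ j * c j ≤ c 0 := by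
  induction d generalizing c with
  | zero => simpa using hc 0
  | succ d ih =>
    have hshift : ∑ j ∈ range (d + 1), (-1) ^ j * c j
        = c 0 - ∑ j ∈ range d, (-1) ^ j * c (j + 1) := by
      rw [sum_range_succ']
      simp only [pow_succ, sum_neg_distrib, mul_neg_one, neg_mul]
      ring
    obtain ⟨h₀, h₁⟩ := ih (fun j => hc (j + 1)) fun i j hij => hanti (by omega)
    rw [hshift]
    exact ⟨by linarith [hanti (Nat.zero_le 1)], by linarith⟩

theorem neg_one_pow_mul_alternating_sum_nonneg_le_of_monotone {c : ℕ → ℝ} (hc : ∀ j, 0 ≤ c j)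
    {n : ℕ} (hmono : ∀ j < n, c j ≤ c (j + 1)) :
    0 ≤ (-1) ^ n * ∑ j ∈ range (n + 1), (-1) ^ j * c j ∧
      (-1) ^ n * ∑ j ∈ range (n + 1), (-1) ^ j * c j ≤ c n := by
  induction n with
  | zero => simpa using hc 0
  | succ n ih =>
    obtain ⟨h₀, h₁⟩ := ih fun j hj => hmono j (by omega)
    rw [neg_one_pow_succ_mul_sum_range_succ]
    exact ⟨by linarith [hmono n (by omega)], by linarith⟩

theorem sub_sub_le_neg_one_pow_mul_alternating_sum {c : ℕ → ℝ} (hc : ∀ j, 0 ≤ c j) {m N : ℕ}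
    (hup : ∀ j ≤ m, c j ≤ c (j + 1)) (hdown : ∀ j, m + 1 ≤ j → c (j + 1) ≤ c j)
    (hN : m + 2 ≤ N) :
    c (m + 1) - c m - c (m + 2) ≤ (-1) ^ (m + 1) * ∑ j ∈ range N, (-1) ^ j * c j := by
  obtain ⟨d, rfl⟩ := Nat.exists_eq_add_of_le hN
  have hhead :=
    (neg_one_pow_mul_alternating_sum_nonneg_le_of_monotone hc fun j hj => hup j hj.le).2
  have htail := (alternating_sum_nonneg_le_of_antitone (c := fun j => c (m + 2 + j))
    (fun j => hc _) (antitone_nat_of_succ_le fun j => hdown (m + 2 + j) (by omega)) d).2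
  have hsign : (-1 : ℝ) ^ (m + 1) * ∑ j ∈ range d, (-1) ^ (m + 2 + j) * c (m + 2 + j)
      = -∑ j ∈ range d, (-1) ^ j * c (m + 2 + j) := by
    rw [mul_sum, ← sum_neg_distrib]
    refine sum_congr rfl fun j _ => ?_
    rw [← mul_assoc, ← pow_add, show m + 1 + (m + 2 + j) = 2 * (m + 1) + (j + 1) by ring,
      pow_add, pow_mul]
    simp [pow_succ]
  rw [sum_range_add, mul_add, neg_one_pow_succ_mul_sum_range_succ, hsign]
  simp only [add_zero] at htail
  linarith

theorem le_succ_of_logConcave {c : ℕ → ℝ} (hlc : ∀ j, c j * c (j + 2) ≤ c (j + 1) ^ 2) {n : ℕ}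
    (hpos : ∀ j ≤ n + 1, 0 < c j) (h : c n ≤ c (n + 1)) : ∀ j ≤ n, c j ≤ c (j + 1) := by
  intro j hj
  induction hj using Nat.decreasingInduction with
  | self => exact h
  | of_succ j hj ih =>
    refine le_of_mul_le_mul_right ?_ (hpos (j + 2) (by omega))
    calc c j * c (j + 2) ≤ c (j + 1) * c (j + 1) := by rw [← sq]; exact hlc j
      _ ≤ c (j + 1) * c (j + 2) := by gcongr; exact (hpos (j + 1) (by omega)).le

theorem succ_le_of_logConcave {c : ℕ → ℝ} (hlc : ∀ j, c j * c (j + 2) ≤ c (j + 1) ^ 2) {k n : ℕ}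
    (hpos : ∀ j ≤ k, 0 < c j) (hzero : ∀ j, k < j → c j = 0) (h : c (n + 1) ≤ c n) :
    ∀ j, n ≤ j → c (j + 1) ≤ c j := by
  intro j hj
  induction j, hj using Nat.le_induction with
  | base => exact h
  | succ j _ ih =>
    by_cases hjk : j + 1 ≤ k
    · have hnn : 0 ≤ c (j + 2) := by
        rcases le_or_gt (j + 2) k with h | h
        · exact (hpos _ h).le
        · exact (hzero _ h).ge
      refine le_of_mul_le_mul_left ?_ (hpos (j + 1) hjk)
      calc c (j + 1) * c (j + 2) ≤ c j * c (j + 2) := by gcongr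
        _ ≤ c (j + 1) * c (j + 1) := by rw [← sq]; exact hlc j
    · rw [hzero (j + 2) (by omega), hzero (j + 1) (by omega)]

theorem neg_one_pow_mul_alternating_sum_pos_of_peak {c : ℕ → ℝ}
    (hlc : ∀ j, c j * c (j + 2) ≤ c (j + 1) ^ 2) {k m : ℕ} (hpos : ∀ j ≤ k, 0 < c j)
    (hzero : ∀ j, k < j → c j = 0) (hm : m + 1 ≤ k) (hpeak : c m + c (m + 2) < c (m + 1)) :
    0 < (-1) ^ (m + 1) * ∑ j ∈ range (k + 1), (-1) ^ j * c j := by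
  have hnn : ∀ j, 0 ≤ c j := fun j => by
    rcases le_or_gt j k with h | h
    · exact (hpos j h).le
    · exact (hzero j h).ge
  have hup := le_succ_of_logConcave hlc (n := m) (fun j hj => hpos j (by omega))
    (by linarith [hnn (m + 2)])
  have hdown := succ_le_of_logConcave hlc hpos hzero (n := m + 1) (by linarith [hnn m])
  linarith [sub_sub_le_neg_one_pow_mul_alternating_sum hnn hup hdown (by omega : m + 2 ≤ k + 1)]

theorem eval_neg_eq_alternating_sum (p : ℝ[X]) (t : ℝ) :
    p.eval (-t) = ∑ j ∈ range (p.natDegree + 1), (-1) ^ j * (p.coeff j * t ^ j) := by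
  rw [eval_eq_sum_range]
  refine sum_congr rfl fun j _ => ?_
  rw [neg_pow]
  ring

theorem logConcave_mul_pow {a : ℕ → ℝ} (hlc : ∀ j, a j * a (j + 2) ≤ a (j + 1) ^ 2) (t : ℝ)
    (j : ℕ) : a j * t ^ j * (a (j + 2) * t ^ (j + 2)) ≤ (a (j + 1) * t ^ (j + 1)) ^ 2 := by
  calc a j * t ^ j * (a (j + 2) * t ^ (j + 2)) = a j * a (j + 2) * (t ^ (j + 1)) ^ 2 := by ring
    _ ≤ a (j + 1) ^ 2 * (t ^ (j + 1)) ^ 2 := by gcongr; exact hlc j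
    _ = (a (j + 1) * t ^ (j + 1)) ^ 2 := by ring

theorem neg_one_pow_mul_eval_neg_pos {p : ℝ[X]} (hpos : ∀ j ≤ p.natDegree, 0 < p.coeff j)
    (hlc : ∀ j, p.coeff j * p.coeff (j + 2) ≤ p.coeff (j + 1) ^ 2) {m : ℕ}
    (hm : m + 1 ≤ p.natDegree) {t : ℝ} (ht : 0 < t)
    (hwin : p.coeff m + p.coeff (m + 2) * t ^ 2 < p.coeff (m + 1) * t) :
    0 < (-1) ^ (m + 1) * p.eval (-t) := by
  rw [eval_neg_eq_alternating_sum]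
  refine neg_one_pow_mul_alternating_sum_pos_of_peak (logConcave_mul_pow hlc t)
    (fun j hj => mul_pos (hpos j hj) (pow_pos ht j))
    (fun j hj => by rw [coeff_eq_zero_of_natDegree_lt hj, zero_mul]) hm ?_
  have := mul_lt_mul_of_pos_right hwin (pow_pos ht m)
  linear_combination this

theorem exists_pos_add_mul_sq_lt_mul {a b c : ℝ} (hb : 0 < b) (hc : 0 ≤ c)
    (h : 4 * a * c < b ^ 2) : ∃ t, 0 < t ∧ a + c * t ^ 2 < b * t := by
  rcases hc.eq_or_lt with rfl | hc
  · refine ⟨(|a| + 1) / b, by positivity, ?_⟩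
    rw [mul_div_cancel₀ _ hb.ne']
    linarith [le_abs_self a]
  · refine ⟨b / (2 * c), by positivity, ?_⟩
    rw [div_pow, mul_div_assoc', ← sub_pos]
    have hgap : b * (b / (2 * c)) - (a + c * b ^ 2 / (2 * c) ^ 2)
        = (b ^ 2 - 4 * a * c) / (4 * c) := by
      field_simp
      ring
    rw [hgap]
    exact div_pos (by linarith) (by positivity)

theorem lt_of_coeff_add_mul_sq_lt {p : ℝ[X]} (hnn : ∀ j, 0 ≤ p.coeff j) {m : ℕ} {s t : ℝ}
    (hs : 0 < s)
    (hws : p.coeff m + p.coeff (m + 2) * s ^ 2 < p.coeff (m + 1) * s)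
    (hwt : p.coeff (m + 1) + p.coeff (m + 3) * t ^ 2 < p.coeff (m + 2) * t) : s < t := by
  have hs' : p.coeff (m + 2) * s < p.coeff (m + 1) := by
    refine lt_of_mul_lt_mul_right ?_ hs.le
    nlinarith [hnn m]
  have ht' : p.coeff (m + 1) < p.coeff (m + 2) * t := by
    nlinarith [hnn (m + 3), sq_nonneg t]
  exact lt_of_mul_lt_mul_left (hs'.trans ht') (hnn (m + 2))

theorem card_roots_toFinset_ge_of_alternating {p : ℝ[X]} {n : ℕ} {x : Fin (n + 1) → ℝ}
    (hx : StrictAnti x) (hsign : ∀ i : Fin (n + 1), 0 < (-1) ^ (i : ℕ) * p.eval (x i)) :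
    n ≤ p.roots.toFinset.card := by
  have hp : p ≠ 0 := by
    rintro rfl
    simpa using hsign 0
  have hroot : ∀ i : Fin n, ∃ r ∈ Set.Ioo (x i.succ) (x i.castSucc), p.IsRoot r := by
    intro i
    have hcast := hsign i.castSucc
    have hsucc := hsign i.succ
    simp only [Fin.val_succ, pow_succ, mul_neg_one, neg_mul, neg_pos] at hsucc
    obtain ⟨r, hr, hr0⟩ := intermediate_value_Ioo (hx i.castSucc_lt_succ).le
      ((continuous_const.mul p.continuous).continuousOn) ⟨hsucc, hcast⟩
    exact ⟨r, hr, (mul_eq_zero.mp hr0).resolve_left (pow_ne_zero _ (by norm_num))⟩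
  choose r hr_mem hr_root using hroot
  have hr_anti : StrictAnti r := fun i j hij =>
    calc r j < x j.castSucc := (hr_mem j).2
      _ ≤ x i.succ := hx.antitone (Fin.succ_le_castSucc_iff.mpr hij)
      _ < r i := (hr_mem i).1
  calc n = (univ.image r).card := by rw [card_image_of_injective _ hr_anti.injective, card_fin]
    _ ≤ p.roots.toFinset.card := card_le_card fun z hz => by
      obtain ⟨i, -, rfl⟩ := mem_image.mp hz
      exact Multiset.mem_toFinset.mpr ((mem_roots hp).mpr (hr_root i))

theorem exists_eq_of_isRoot_map_of_natDegree_le {K L : Type*} [Field K] [CommRing L] [IsDomain L]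
    {p : K[X]} (hp : p ≠ 0) (hdeg : p.natDegree ≤ p.roots.card) {f : K →+* L} {z : L}
    (hz : (p.map f).IsRoot z) : ∃ x, p.IsRoot x ∧ f x = z := by
  have hsplit : p.Splits := splits_iff_card_roots.mpr (le_antisymm (card_roots' p) hdeg)
  obtain ⟨x, rfl⟩ := hsplit.mem_range_of_isRoot hp hz
  exact ⟨x, hz.of_map f.injective, rfl⟩

theorem coeff_nonneg_of_pos {p : ℝ[X]} (hpos : ∀ j ≤ p.natDegree, 0 < p.coeff j) (j : ℕ) :
    0 ≤ p.coeff j := by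
  rcases le_or_gt j p.natDegree with h | h
  · exact (hpos j h).le
  · exact (coeff_eq_zero_of_natDegree_lt h).ge

theorem eval_pos_of_coeff_nonneg {p : ℝ[X]} (hnn : ∀ j, 0 ≤ p.coeff j) (h0 : 0 < p.coeff 0)
    {x : ℝ} (hx : 0 ≤ x) : 0 < p.eval x := by
  rw [eval_eq_sum_range, sum_range_succ']
  simp only [pow_zero, mul_one]
  exact add_pos_of_nonneg_of_pos (sum_nonneg fun j _ => by have := hnn (j + 1); positivity) h0

theorem exists_strictAnti_alternating_eval {p : ℝ[X]} (hpos : ∀ j ≤ p.natDegree, 0 < p.coeff j)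
    (hcond : ∀ j, j + 2 ≤ p.natDegree → 4 * p.coeff j * p.coeff (j + 2) < p.coeff (j + 1) ^ 2) :
    ∃ x : Fin (p.natDegree + 1) → ℝ, StrictAnti x ∧
      ∀ i : Fin (p.natDegree + 1), 0 < (-1) ^ (i : ℕ) * p.eval (x i) := by
  have hnn := coeff_nonneg_of_pos hpos
  have hcond' :
      ∀ j, 4 * p.coeff j * p.coeff (j + 2) < p.coeff (j + 1) ^ 2 ∨ p.coeff (j + 2) = 0 :=
    fun j => (le_or_gt (j + 2) p.natDegree).imp (hcond j) coeff_eq_zero_of_natDegree_lt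
  have hlc : ∀ j, p.coeff j * p.coeff (j + 2) ≤ p.coeff (j + 1) ^ 2 := fun j => by
    rcases hcond' j with h | h
    · nlinarith [hnn j, hnn (j + 2)]
    · rw [h, mul_zero]; positivity
  have hwindow : ∀ m, m + 1 ≤ p.natDegree →
      ∃ t, 0 < t ∧ p.coeff m + p.coeff (m + 2) * t ^ 2 < p.coeff (m + 1) * t := fun m hm =>
    exists_pos_add_mul_sq_lt_mul (hpos _ hm) (hnn _) <| by
      rcases hcond' m with h | h
      · exact h
      · rw [h, mul_zero]; exact pow_pos (hpos _ hm) 2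
  choose! t ht using hwindow
  let τ : ℕ → ℝ := fun | 0 => 0 | m + 1 => t m
  refine ⟨fun i => -τ i, Fin.strictAnti_iff_succ_lt.mpr fun i => ?_, fun i => ?_⟩
  · obtain ⟨_ | m, hm⟩ := i
    · simpa [τ] using (ht 0 (by omega)).1
    · simpa [τ] using lt_of_coeff_add_mul_sq_lt hnn (ht m (by omega)).1 (ht m (by omega)).2
        (ht (m + 1) hm).2
  · obtain ⟨_ | m, hm⟩ := i
    · simpa [τ, ← coeff_zero_eq_eval_zero] using hpos 0 (Nat.zero_le _)
    · exact neg_one_pow_mul_eval_neg_pos hpos hlc (by omega) (ht m (by omega)).1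
        (ht m (by omega)).2

theorem hutchinson_roots_real_neg_general (P : Polynomial ℝ) (k : ℕ)
    (hdeg : P.natDegree = k) (hpos : ∀ i ≤ k, 0 < P.coeff i)
    (hcond : ∀ i, 1 ≤ i → i ≤ k - 1 →
      P.coeff i ^ 2 > 4 * P.coeff (i - 1) * P.coeff (i + 1)) :
    ∀ z : ℂ, (P.map (algebraMap ℝ ℂ)).IsRoot z → z.im = 0 ∧ z.re < 0 := by
  subst hdeg
  obtain ⟨x, hx, hsign⟩ := exists_strictAnti_alternating_eval hpos fun j hj => by
    simpa using hcond (j + 1) (by omega) (by omega)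
  have hP : P ≠ 0 := by
    rintro rfl
    simpa using hsign 0
  intro z hz
  obtain ⟨r, hr, rfl⟩ := exists_eq_of_isRoot_map_of_natDegree_le hP
    ((card_roots_toFinset_ge_of_alternating hx hsign).trans (Multiset.toFinset_card_le _)) hz
  refine ⟨by simp, ?_⟩
  by_contra! hr0
  exact (eval_pos_of_coeff_nonneg (coeff_nonneg_of_pos hpos) (hpos 0 (Nat.zero_le _))
    (by simpa using hr0)).ne' hr

/-- Hutchinson's theorem: if a real polynomial `∑_{i=0}^k a_i x^i` has all coefficients
positive and satisfies `a_i ^ 2 > 4 * a_{i-1} * a_{i+1}` for `i = 1, …, k-1`, then all of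
its (complex) roots are real and negative. -/
theorem hutchinson_roots_real_neg (P : Polynomial ℝ) (k : ℕ) (hk : 1 ≤ k)
    (hdeg : P.natDegree = k) (hpos : ∀ i ≤ k, 0 < P.coeff i)
    (hcond : ∀ i, 1 ≤ i → i ≤ k - 1 →
      P.coeff i ^ 2 > 4 * P.coeff (i - 1) * P.coeff (i + 1)) :
    ∀ z : ℂ, (P.map (algebraMap ℝ ℂ)).IsRoot z → z.im = 0 ∧ z.re < 0 :=
  hutchinson_roots_real_neg_general P k hdeg hpos hcond
end

section
/- Let D be a pseudo-tensor category, p : V → U an epimorphism, and u : U → 𝟙 a morphism. If u ∘ p has the property that V ⊗ V ⇉ V → 𝟙 is a coequaliser, then U ⊗ U ⇉ U → 𝟙 is a coequaliser. -/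
/-! Naturality of the unitors shows that `p ⊗ p` intertwines the pairs `V ⊗ V ⇉ V` and
`U ⊗ U ⇉ U`, so a cofork `s` of the latter yields the cofork `p ≫ s.π` of the former. Its
factorisation through `p ≫ u` descends along the epimorphism `p` to a factorisation of `s.π`
through `u`, unique because the coequaliser `p ≫ u` is an epimorphism. -/

open CategoryTheory MonoidalCategory CategoryTheory.Limits

universe v u

/-- For any morphism `w : W ⟶ 𝟙` in a monoidal category, the two composites
`W ⊗ W ⟶ W ⟶ 𝟙` agree; this is the compatibility condition for the cofork below. -/
theorem toUnit_cofork_condition {D : Type u} [Category.{v} D]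
    [MonoidalCategory D] {W : D} (w : W ⟶ 𝟙_ D) :
    ((w ▷ W) ≫ (λ_ W).hom) ≫ w = ((W ◁ w) ≫ (ρ_ W).hom) ≫ w := by
  rw [Category.assoc, Category.assoc, ← MonoidalCategory.leftUnitor_naturality,
    ← MonoidalCategory.rightUnitor_naturality, ← Category.assoc, ← Category.assoc,
    ← MonoidalCategory.whisker_exchange, MonoidalCategory.unitors_equal]

namespace CategoryTheory.Limits

variable {C : Type u} [Category.{v} C] {X Y Z X' Y' : C} {f g : X ⟶ Y} {f' g' : X' ⟶ Y'}

def Cofork.IsColimit.ofEpiComp (e : X' ⟶ X) (p : Y' ⟶ Y) [Epi p]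
    (hf : f' ≫ p = e ≫ f) (hg : g' ≫ p = e ≫ g) (π : Y ⟶ Z) (w : f ≫ π = g ≫ π)
    (w' : f' ≫ p ≫ π = g' ≫ p ≫ π) (hc : IsColimit (Cofork.ofπ (p ≫ π) w')) :
    IsColimit (Cofork.ofπ π w) :=
  haveI : Epi (p ≫ π) := epi_of_isColimit_cofork hc
  Cofork.IsColimit.mk' _ fun s =>
    let d := Cofork.IsColimit.desc' hc (p ≫ s.π) (by
      rw [reassoc_of% hf, reassoc_of% hg, s.condition])
    ⟨d.1, (cancel_epi p).1 ((Category.assoc _ _ _).symm.trans d.2),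
      fun hm => (cancel_epi (p ≫ π)).1
        ((Category.assoc _ _ _).trans ((congrArg (p ≫ ·) hm).trans d.2.symm))⟩

end CategoryTheory.Limits

namespace CategoryTheory.MonoidalCategory

variable {C : Type u} [Category.{v} C] [MonoidalCategory C] {V U : C}

theorem comp_whiskerRight_leftUnitor_hom_comp (p : V ⟶ U) (u : U ⟶ 𝟙_ C) :
    (((p ≫ u) ▷ V) ≫ (λ_ V).hom) ≫ p = (p ⊗ₘ p) ≫ (u ▷ U) ≫ (λ_ U).hom := by
  rw [Category.assoc, ← leftUnitor_naturality, comp_whiskerRight, Category.assoc,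
    ← whisker_exchange_assoc, tensorHom_def_assoc]

theorem whiskerLeft_comp_rightUnitor_hom_comp (p : V ⟶ U) (u : U ⟶ 𝟙_ C) :
    ((V ◁ (p ≫ u)) ≫ (ρ_ V).hom) ≫ p = (p ⊗ₘ p) ≫ (U ◁ u) ≫ (ρ_ U).hom := by
  rw [Category.assoc, ← rightUnitor_naturality, whiskerLeft_comp, Category.assoc,
    whisker_exchange_assoc, tensorHom_def'_assoc]

end CategoryTheory.MonoidalCategory

theorem coequalizer_of_comp_coequalizer_general
    {D : Type u} [Category.{v} D]
    [MonoidalCategory D]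
    {V U : D} (p : V ⟶ U) [Epi p] (u : U ⟶ 𝟙_ D)
    (h : Nonempty (IsColimit (Cofork.ofπ (p ≫ u) (toUnit_cofork_condition (p ≫ u))))) :
    Nonempty (IsColimit (Cofork.ofπ u (toUnit_cofork_condition u))) :=
  h.map (Cofork.IsColimit.ofEpiComp (p ⊗ₘ p) p (comp_whiskerRight_leftUnitor_hom_comp p u)
    (whiskerLeft_comp_rightUnitor_hom_comp p u) u _ _)

/-- Let `D` be a pseudo-tensor category over `k` (a `k`-linear rigid monoidal idempotent
complete additive category with `End 𝟙 = k`), `p : V ⟶ U` an epimorphism and `u : U ⟶ 𝟙` a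
morphism.  If `V ⊗ V ⇉ V ⟶ 𝟙` (for `u ∘ p`) is a coequaliser, then `U ⊗ U ⇉ U ⟶ 𝟙`
(for `u`) is a coequaliser. -/
theorem coequalizer_of_comp_coequalizer
    {k : Type*} [Field k]
    {D : Type u} [Category.{v} D] [Preadditive D] [Linear k D]
    [MonoidalCategory D] [MonoidalPreadditive D] [MonoidalLinear k D] [RigidCategory D]
    [IsIdempotentComplete D]
    (hunit : Function.Bijective fun a : k => a • (𝟙 (𝟙_ D)))
    {V U : D} (p : V ⟶ U) [Epi p] (u : U ⟶ 𝟙_ D)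
    (h : Nonempty (IsColimit (Cofork.ofπ (p ≫ u) (toUnit_cofork_condition (p ≫ u))))) :
    Nonempty (IsColimit (Cofork.ofπ u (toUnit_cofork_condition u))) :=
  coequalizer_of_comp_coequalizer_general p u h
end
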